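/- arXiv:2502.13386 — 3 statements merged into one kernel-verified Lean document; each statement's English description precedes it below -/
import Mathlib

section
/- Let b > 0, a ≥ 0, R_t > 0, β > 0, λ₁ > 0, and M ≠ 0 be real numbers, and set λ₀ = λ₁/(b·β). Define ξ₁(M) = (2/(b·M²))·[(1/λ₀ · M²/(R_t + a·M²))^{1/(β+1)} − 1]. If ξ₁(M) > 0, then ξ₁(M) is the unique positive solution ξ of the stationarity equation β·(½·b·M²)·(1 + ½·b·M²·ξ)^{−β−1} = λ₁·½·(R_t + a·M²), i.e., the derivative of g(ξ) = (1 + ½·b·M²·ξ)^{−β} + λ₁·½·ξ·(R_t + a·M²) vanishes at ξ = ξ₁(M). -/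
/-- The interior water-filling level
`ξ₁(M) = (2/(b·M²))·[(1/λ₀ · M²/(R_t + a·M²))^{1/(β+1)} − 1]`, when positive,
is the unique positive solution of the stationarity equation
`β·(½·b·M²)·(1 + ½·b·M²·ξ)^{−β−1} = λ₁·½·(R_t + a·M²)` arising from the KKT
conditions of the effective-capacity maximization problem. -/
theorem mi_stationarity_solution
    (b a Rt β lam₁ M : ℝ)
    (hb : 0 < b) (ha : 0 ≤ a) (hRt : 0 < Rt) (hβ : 0 < β) (hlam₁ : 0 < lam₁)
    (hM : M ≠ 0)
    (lam₀ : ℝ) (hlam₀ : lam₀ = lam₁ / (b * β))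
    (ξ₁ : ℝ)
    (hξ₁ : ξ₁ = (2 / (b * M ^ 2)) *
        ((1 / lam₀ * (M ^ 2 / (Rt + a * M ^ 2))) ^ (1 / (β + 1)) - 1))
    (hpos : 0 < ξ₁) :
    β * ((1 / 2) * b * M ^ 2) * (1 + (1 / 2) * b * M ^ 2 * ξ₁) ^ (-β - 1) =
      lam₁ * (1 / 2) * (Rt + a * M ^ 2) ∧
    ∀ ξ : ℝ, 0 < ξ →
      β * ((1 / 2) * b * M ^ 2) * (1 + (1 / 2) * b * M ^ 2 * ξ) ^ (-β - 1) =
        lam₁ * (1 / 2) * (Rt + a * M ^ 2) → ξ = ξ₁ := by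
  have hM2 : (0:ℝ) < M ^ 2 := by positivity
  have hC : (0:ℝ) < Rt + a * M ^ 2 := by positivity
  have hA : (0:ℝ) < (1 / 2) * b * M ^ 2 := by positivity
  set K : ℝ := 1 / lam₀ * (M ^ 2 / (Rt + a * M ^ 2)) with hK
  have hlam₀pos : 0 < lam₀ := by rw [hlam₀]; positivity
  have hKpos : 0 < K := by rw [hK]; positivity
  have hβ1 : (0:ℝ) < β + 1 := by positivity
  -- base identity
  have hbase : 1 + (1 / 2) * b * M ^ 2 * ξ₁ = K ^ (1 / (β + 1)) := by
    rw [hξ₁]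
    field_simp
    ring
  have hbpos : (0:ℝ) < 1 + (1 / 2) * b * M ^ 2 * ξ₁ := by positivity
  have hexp : 1 / (β + 1) * (-β - 1) = -1 := by
    field_simp
    ring
  have hKrpow : (1 + (1 / 2) * b * M ^ 2 * ξ₁) ^ (-β - 1) = K⁻¹ := by
    rw [hbase, ← Real.rpow_mul hKpos.le, hexp, Real.rpow_neg_one]
  have hstat : β * ((1 / 2) * b * M ^ 2) * (1 + (1 / 2) * b * M ^ 2 * ξ₁) ^ (-β - 1)
      = lam₁ * (1 / 2) * (Rt + a * M ^ 2) := by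
    rw [hKrpow, hK, hlam₀]
    field_simp
  refine ⟨hstat, ?_⟩
  intro ξ hξpos heq
  have hxpos : (0:ℝ) < 1 + (1 / 2) * b * M ^ 2 * ξ := by positivity
  have h1 : (1 + (1 / 2) * b * M ^ 2 * ξ) ^ (-β - 1)
      = (1 + (1 / 2) * b * M ^ 2 * ξ₁) ^ (-β - 1) := by
    have hne : β * ((1 / 2) * b * M ^ 2) ≠ 0 := by positivity
    exact mul_left_cancel₀ hne (heq.trans hstat.symm)
  have hp : (-β - 1) ≠ 0 := by
    intro h; nlinarith
  have h2 := congrArg (fun x : ℝ => x ^ (-β - 1)⁻¹) h1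
  simp only [← Real.rpow_mul hxpos.le, ← Real.rpow_mul hbpos.le,
    mul_inv_cancel₀ hp, Real.rpow_one] at h2
  have := mul_left_cancel₀ hA.ne' (by linarith : (1 / 2) * b * M ^ 2 * ξ = (1 / 2) * b * M ^ 2 * ξ₁)
  linarith
end

section
/- Let b > 0, a ≥ 0, R_t > 0, β > 0, λ₁ > 0, R_max > 0, set λ₀ = λ₁/(b·β), and assume 1/(λ₀·2^{R_max·(β+1)}) > a (hence also 1/λ₀ > a). Set M₁ = √(R_t/(1/λ₀ − a)) and M₂ = √(R_t/(1/(λ₀·2^{R_max·(β+1)}) − a)). For each M ≠ 0, define g(ξ) = (1 + ½·b·M²·ξ)^{−β} + λ₁·½·ξ·(R_t + a·M²), ξ₁(M) = (2/(b·M²))·[(1/λ₀ · M²/(R_t + a·M²))^{1/(β+1)} − 1], and ξ₂(M) = (2/(b·M²))·(2^{R_max} − 1). Then the unique minimizer of g over the interval [0, ξ₂(M)] is: 0 when 0 < |M| ≤ M₁; ξ₁(M) when M₁ < |M| < M₂; and ξ₂(M) when |M| ≥ M₂. -/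
/-!
The per-state Lagrangian is `ξ ↦ (1 + c ξ)^(-β) + d ξ` with `c = b M² / 2` and
`d = λ₁ (R_t + a M²) / 2`. Where `1 + c ξ > 0` its derivative `d - β c / (1 + c ξ)^(β+1)` is
increasing and vanishes exactly at `1 + c ξ = K`, where `K^(β+1) = β c / d`; so the Lagrangian
decreases strictly up to that point and increases strictly after it, and its unique minimizer on
`[0, ξ₂]` is the stationary point clamped to that interval. Here `K` is the water level
`(M² / (λ₀ (R_t + a M²)))^(1/(β+1))`, which increases with `|M|` and passes `1` at `|M| = M₁` and
`1 + c ξ₂ = 2^R_max` at `|M| = M₂`.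
-/

def IsUniqueMinOn (f : ℝ → ℝ) (s : Set ℝ) (x : ℝ) : Prop :=
  x ∈ s ∧ (∀ y ∈ s, f x ≤ f y) ∧ ∀ z ∈ s, (∀ y ∈ s, f z ≤ f y) → z = x

open Set

theorem isUniqueMinOn_Icc_of_strictAntiOn_of_strictMonoOn {f : ℝ → ℝ} {l u x : ℝ}
    (hx : x ∈ Icc l u) (hanti : StrictAntiOn f (Icc l x)) (hmono : StrictMonoOn f (Icc x u)) :
    IsUniqueMinOn f (Icc l u) x := by
  have hlt : ∀ y ∈ Icc l u, y ≠ x → f x < f y := by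
    intro y hy hyx
    rcases hyx.lt_or_gt with h | h
    · exact hanti ⟨hy.1, h.le⟩ ⟨hx.1, le_rfl⟩ h
    · exact hmono ⟨le_rfl, hx.2⟩ ⟨h.le, hy.2⟩ h
  refine ⟨hx, fun y hy => ?_, fun z hz hmin => ?_⟩
  · rcases eq_or_ne y x with rfl | hyx
    · exact le_rfl
    · exact (hlt y hy hyx).le
  · by_contra hzx
    exact (hmin x hx).not_gt (hlt z hz hzx)

theorem sub_div_rpow_neg {d e p u K : ℝ} (hd : 0 < d) (hp : 0 < p) (hu : 0 < u)
    (hK : K ^ p = e / d) (huK : u < K) : d - e / u ^ p < 0 := by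
  have hpow : u ^ p < e / d := hK ▸ Real.rpow_lt_rpow hu.le huK hp
  have : d * u ^ p < e := by rw [lt_div_iff₀ hd] at hpow; linarith
  rw [sub_neg, lt_div_iff₀ (Real.rpow_pos_of_pos hu p)]
  linarith

theorem sub_div_rpow_pos {d e p u K : ℝ} (hd : 0 < d) (hp : 0 < p) (hK₀ : 0 < K)
    (hK : K ^ p = e / d) (huK : K < u) : 0 < d - e / u ^ p := by
  have hpow : e / d < u ^ p := hK ▸ Real.rpow_lt_rpow hK₀.le huK hp
  have : e < d * u ^ p := by rw [div_lt_iff₀ hd] at hpow; linarith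
  rw [sub_pos, div_lt_iff₀ (Real.rpow_pos_of_pos (hK₀.trans huK) p)]
  linarith

noncomputable def lagrangian (β c d : ℝ) (ξ : ℝ) : ℝ := (1 + c * ξ) ^ (-β) + d * ξ

section Lagrangian

variable {β c d K : ℝ}

theorem hasDerivAt_lagrangian {ξ : ℝ} (hξ : 0 < 1 + c * ξ) :
    HasDerivAt (lagrangian β c d) (d - β * c / (1 + c * ξ) ^ (β + 1)) ξ := by
  have hlin : HasDerivAt (fun ξ => 1 + c * ξ) c ξ := by
    simpa using ((hasDerivAt_id ξ).const_mul c).const_add 1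
  refine ((hlin.rpow_const (p := -β) (Or.inl hξ.ne')).add
    ((hasDerivAt_id ξ).const_mul d)).congr_deriv ?_
  rw [show -β - 1 = -(β + 1) by ring, Real.rpow_neg hξ.le]
  simp only [mul_one]
  ring

theorem continuousOn_lagrangian {s : Set ℝ} (hs : ∀ ξ ∈ s, 0 < 1 + c * ξ) :
    ContinuousOn (lagrangian β c d) s := fun ξ hξ =>
  (hasDerivAt_lagrangian (hs ξ hξ)).continuousAt.continuousWithinAt

theorem strictAntiOn_lagrangian (hc : 0 < c) (hd : 0 < d) (hβ : 0 < β)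
    (hK : K ^ (β + 1) = β * c / d) {x : ℝ} (hx : 1 + c * x ≤ K) :
    StrictAntiOn (lagrangian β c d) (Icc 0 x) := by
  have hpos : ∀ ξ ∈ Icc 0 x, 0 < 1 + c * ξ := fun ξ hξ => by nlinarith [hξ.1]
  refine strictAntiOn_of_hasDerivWithinAt_neg (convex_Icc 0 x) (continuousOn_lagrangian hpos)
    (fun ξ hξ => (hasDerivAt_lagrangian (hpos ξ (interior_subset hξ))).hasDerivWithinAt)
    fun ξ hξ => ?_
  rw [interior_Icc] at hξ
  exact sub_div_rpow_neg hd (by linarith) (hpos ξ (Ioo_subset_Icc_self hξ)) hK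
    (by nlinarith [hξ.2])

theorem strictMonoOn_lagrangian (hc : 0 < c) (hd : 0 < d) (hβ : 0 < β) (hK₀ : 0 < K)
    (hK : K ^ (β + 1) = β * c / d) {x B : ℝ} (hx : K ≤ 1 + c * x) :
    StrictMonoOn (lagrangian β c d) (Icc x B) := by
  have hpos : ∀ ξ ∈ Icc x B, 0 < 1 + c * ξ := fun ξ hξ => by nlinarith [hξ.1]
  refine strictMonoOn_of_hasDerivWithinAt_pos (convex_Icc x B) (continuousOn_lagrangian hpos)
    (fun ξ hξ => (hasDerivAt_lagrangian (hpos ξ (interior_subset hξ))).hasDerivWithinAt)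
    fun ξ hξ => ?_
  rw [interior_Icc] at hξ
  exact sub_div_rpow_pos hd (by linarith) hK₀ hK (by nlinarith [hξ.1])

theorem isUniqueMinOn_lagrangian_Icc (hc : 0 < c) (hd : 0 < d) (hβ : 0 < β) (hK₀ : 0 < K)
    (hK : K ^ (β + 1) = β * c / d) {x B : ℝ} (hx : 1 + c * x = K) (hB : 0 ≤ B) :
    (K ≤ 1 → IsUniqueMinOn (lagrangian β c d) (Icc 0 B) 0) ∧
      (1 < K → K < 1 + c * B → IsUniqueMinOn (lagrangian β c d) (Icc 0 B) x) ∧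
      (1 + c * B ≤ K → IsUniqueMinOn (lagrangian β c d) (Icc 0 B) B) := by
  refine ⟨fun h => ?_, fun h1 hB' => ?_, fun h => ?_⟩
  · exact isUniqueMinOn_Icc_of_strictAntiOn_of_strictMonoOn ⟨le_rfl, hB⟩
      ((subsingleton_Icc_of_ge le_rfl).strictAntiOn _)
      (strictMonoOn_lagrangian hc hd hβ hK₀ hK (by simpa using h))
  · exact isUniqueMinOn_Icc_of_strictAntiOn_of_strictMonoOn ⟨by nlinarith, by nlinarith⟩
      (strictAntiOn_lagrangian hc hd hβ hK hx.le) (strictMonoOn_lagrangian hc hd hβ hK₀ hK hx.ge)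
  · exact isUniqueMinOn_Icc_of_strictAntiOn_of_strictMonoOn ⟨hB, le_rfl⟩
      (strictAntiOn_lagrangian hc hd hβ hK h) ((subsingleton_Icc_of_ge le_rfl).strictMonoOn _)

end Lagrangian

section Threshold

variable {lam₀ Rt a t m : ℝ}

theorem scaled_le_iff_le_threshold (hlam₀ : 0 < lam₀) (hRt : 0 < Rt) (ha : 0 ≤ a) (ht : 0 < t)
    (hat : a < 1 / (lam₀ * t)) (hm : 0 ≤ m) :
    1 / lam₀ * (m / (Rt + a * m)) ≤ t ↔ m ≤ Rt / (1 / (lam₀ * t) - a) := by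
  have hR : 0 < Rt + a * m := by positivity
  have hlt : 0 < lam₀ * t := by positivity
  rw [one_div_mul_eq_div, div_div, div_le_iff₀ (by positivity), le_div_iff₀ (sub_pos.mpr hat),
    show m * (1 / (lam₀ * t) - a) = (m - t * (lam₀ * (a * m))) / (lam₀ * t) by field_simp,
    div_le_iff₀ hlt]
  constructor <;> intro h <;> linarith

theorem scaled_lt_iff_lt_threshold (hlam₀ : 0 < lam₀) (hRt : 0 < Rt) (ha : 0 ≤ a) (ht : 0 < t)
    (hat : a < 1 / (lam₀ * t)) (hm : 0 ≤ m) :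
    1 / lam₀ * (m / (Rt + a * m)) < t ↔ m < Rt / (1 / (lam₀ * t) - a) := by
  have hR : 0 < Rt + a * m := by positivity
  have hlt : 0 < lam₀ * t := by positivity
  rw [one_div_mul_eq_div, div_div, div_lt_iff₀ (by positivity), lt_div_iff₀ (sub_pos.mpr hat),
    show m * (1 / (lam₀ * t) - a) = (m - t * (lam₀ * (a * m))) / (lam₀ * t) by field_simp,
    div_lt_iff₀ hlt]
  constructor <;> intro h <;> linarith

variable {p s M : ℝ}

theorem rpow_le_iff_abs_le_sqrt (hlam₀ : 0 < lam₀) (hRt : 0 < Rt) (ha : 0 ≤ a) (hp : 0 < p)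
    (hs : 0 < s) (has : a < 1 / (lam₀ * s ^ p)) :
    (1 / lam₀ * (M ^ 2 / (Rt + a * M ^ 2))) ^ (1 / p) ≤ s ↔
      |M| ≤ √(Rt / (1 / (lam₀ * s ^ p) - a)) := by
  rw [one_div p, Real.rpow_inv_le_iff_of_pos (by positivity) hs.le hp,
    scaled_le_iff_le_threshold hlam₀ hRt ha (by positivity) has (sq_nonneg M),
    Real.le_sqrt (abs_nonneg M) (div_pos hRt (sub_pos.mpr has)).le, sq_abs]

theorem rpow_lt_iff_abs_lt_sqrt (hlam₀ : 0 < lam₀) (hRt : 0 < Rt) (ha : 0 ≤ a) (hp : 0 < p)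
    (hs : 0 < s) (has : a < 1 / (lam₀ * s ^ p)) :
    (1 / lam₀ * (M ^ 2 / (Rt + a * M ^ 2))) ^ (1 / p) < s ↔
      |M| < √(Rt / (1 / (lam₀ * s ^ p) - a)) := by
  rw [one_div p, Real.rpow_inv_lt_iff_of_pos (by positivity) hs.le hp,
    scaled_lt_iff_lt_threshold hlam₀ hRt ha (by positivity) has (sq_nonneg M),
    Real.lt_sqrt (abs_nonneg M), sq_abs]

end Threshold

theorem one_add_half_mul_two_div_mul {b m y : ℝ} (hb : b ≠ 0) (hm : m ≠ 0) :
    1 + 1 / 2 * b * m * (2 / (b * m) * (y - 1)) = y := by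
  field_simp
  ring

theorem water_level_rpow_eq {b β lam₁ lam₀ Rt a m : ℝ} (hb : 0 < b) (hβ : 0 < β)
    (hlam₁ : 0 < lam₁) (hlam₀ : lam₀ = lam₁ / (b * β)) (hR : 0 < Rt + a * m) (hm : 0 ≤ m) :
    ((1 / lam₀ * (m / (Rt + a * m))) ^ (1 / (β + 1))) ^ (β + 1) =
      β * (1 / 2 * b * m) / (lam₁ * (1 / 2) * (Rt + a * m)) := by
  subst hlam₀
  rw [← Real.rpow_mul (by positivity), one_div_mul_cancel (by positivity), Real.rpow_one]
  field_simp

/-- Pointwise form of the paper's Theorem 1 (optimal current control for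
QoS-aware MI communication): for each mutual-inductance state `M ≠ 0`, the
unique minimizer of the per-state Lagrangian
`g(ξ) = (1 + ½·b·M²·ξ)^{−β} + λ₁·½·ξ·(R_t + a·M²)` over `[0, ξ₂(M)]` is `0`
when `0 < |M| ≤ M₁`, the water-filling value `ξ₁(M)` when `M₁ < |M| < M₂`, and
the peak value `ξ₂(M)` when `|M| ≥ M₂`. -/
theorem mi_optimal_current_control
    (b a Rt β lam₁ Rmax : ℝ)
    (hb : 0 < b) (ha : 0 ≤ a) (hRt : 0 < Rt) (hβ : 0 < β) (hlam₁ : 0 < lam₁)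
    (hRmax : 0 < Rmax)
    (lam₀ : ℝ) (hlam₀ : lam₀ = lam₁ / (b * β))
    (hinv : a < 1 / (lam₀ * (2 : ℝ) ^ (Rmax * (β + 1))))
    (M₁ M₂ : ℝ)
    (hM₁ : M₁ = Real.sqrt (Rt / (1 / lam₀ - a)))
    (hM₂ : M₂ = Real.sqrt (Rt / (1 / (lam₀ * (2 : ℝ) ^ (Rmax * (β + 1))) - a)))
    (g : ℝ → ℝ → ℝ)
    (hg : ∀ M ξ : ℝ, g M ξ =
        (1 + (1 / 2) * b * M ^ 2 * ξ) ^ (-β) + lam₁ * (1 / 2) * ξ * (Rt + a * M ^ 2))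
    (ξ₁ ξ₂ : ℝ → ℝ)
    (hξ₁ : ∀ M : ℝ, M ≠ 0 → ξ₁ M = (2 / (b * M ^ 2)) *
        ((1 / lam₀ * (M ^ 2 / (Rt + a * M ^ 2))) ^ (1 / (β + 1)) - 1))
    (hξ₂ : ∀ M : ℝ, M ≠ 0 → ξ₂ M = (2 / (b * M ^ 2)) * ((2 : ℝ) ^ Rmax - 1)) :
    ∀ M : ℝ, M ≠ 0 →
      ((|M| ≤ M₁ → IsUniqueMinOn (g M) (Set.Icc 0 (ξ₂ M)) 0) ∧
       (M₁ < |M| ∧ |M| < M₂ → IsUniqueMinOn (g M) (Set.Icc 0 (ξ₂ M)) (ξ₁ M)) ∧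
       (M₂ ≤ |M| → IsUniqueMinOn (g M) (Set.Icc 0 (ξ₂ M)) (ξ₂ M))) := by
  intro M hM
  have hlam₀pos : 0 < lam₀ := hlam₀ ▸ by positivity
  have hp : 0 < β + 1 := by linarith
  have hET : ((2 : ℝ) ^ Rmax) ^ (β + 1) = 2 ^ (Rmax * (β + 1)) :=
    (Real.rpow_mul zero_le_two _ _).symm
  have hinv₁ : a < 1 / (lam₀ * 1 ^ (β + 1)) := by
    rw [Real.one_rpow, mul_one]
    exact hinv.trans_le (one_div_le_one_div_of_le hlam₀pos
      (le_mul_of_one_le_right hlam₀pos.le (Real.one_le_rpow one_le_two (by positivity))))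
  have hc : 0 < 1 / 2 * b * M ^ 2 := by positivity
  have hξ₁K := one_add_half_mul_two_div_mul hb.ne' (pow_ne_zero 2 hM)
    (y := (1 / lam₀ * (M ^ 2 / (Rt + a * M ^ 2))) ^ (1 / (β + 1)))
  have hξ₂E := one_add_half_mul_two_div_mul hb.ne' (pow_ne_zero 2 hM) (y := (2 : ℝ) ^ Rmax)
  rw [← hξ₁ M hM] at hξ₁K
  rw [← hξ₂ M hM] at hξ₂E
  have hKM₁ := rpow_le_iff_abs_le_sqrt hlam₀pos hRt ha hp one_pos hinv₁ (M := M)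
  rw [Real.one_rpow, mul_one, ← hM₁] at hKM₁
  have hKM₂ := rpow_lt_iff_abs_lt_sqrt hlam₀pos hRt ha hp (by positivity) (hET ▸ hinv) (M := M)
  rw [hET, ← hM₂, ← hξ₂E] at hKM₂
  have hξ₂ : 0 ≤ ξ₂ M := by nlinarith [Real.one_lt_rpow one_lt_two hRmax, hc]
  obtain ⟨hlow, hmid, hhigh⟩ := isUniqueMinOn_lagrangian_Icc (d := lam₁ * (1 / 2) * (Rt + a * M ^ 2))
    hc (by positivity) hβ (by positivity)
    (water_level_rpow_eq hb hβ hlam₁ hlam₀ (by positivity) (sq_nonneg M)) hξ₁K hξ₂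
  have hgM : g M = lagrangian β (1 / 2 * b * M ^ 2) (lam₁ * (1 / 2) * (Rt + a * M ^ 2)) :=
    funext fun ξ => by rw [hg, lagrangian]; ring
  rw [hgM]
  exact ⟨fun h => hlow (hKM₁.mpr h),
    fun h => hmid ((lt_iff_lt_of_le_iff_le hKM₁).mpr h.1) (hKM₂.mpr h.2),
    fun h => hhigh (not_lt.mp (hKM₂.not.mpr h.not_gt))⟩
end

section
/- Define f_J : ℝ → ℝ by f_J(J) = (3/2)·(1 − (4/π)·arccos(|J|/√(1 − J²))) for 1/√3 ≤ |J| < 1/√2, f_J(J) = 3/2 for 1/√2 ≤ |J| ≤ 1, and f_J(J) = 0 otherwise. Then f_J is nonnegative and ∫_{−∞}^{∞} f_J(J) dJ = 1; that is, f_J is a probability density function on ℝ. -/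
/-!
The density is even, vanishes for `|J| ≤ 1/√3` and `|J| > 1`, and equals `3/2` for
`1/√2 ≤ |J| ≤ 1`. On `[1/√3, 1/√2]` it has the elementary primitive
`(3/2) (x - (4/π) (x arccos (x/√(1-x²)) - arctan √(1-2x²)))`, which takes the values `1` and
`3/(2√2)` at the endpoints, so `∫ f = 2 (3/(2√2) - 1 + (3/2)(1 - 1/√2)) = 1`.
Nonnegativity holds because `x/√(1-x²) ≥ √2/2` once `x² ≥ 1/3`, so the arccos is at most `π/4`.
-/

open MeasureTheory

/-- The density of the alignment factor `J` in the stochastic misalignment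
model for MI links. -/
noncomputable def alignmentPDF (J : ℝ) : ℝ :=
  if 1 / Real.sqrt 3 ≤ |J| ∧ |J| < 1 / Real.sqrt 2 then
    (3 / 2) * (1 - (4 / Real.pi) * Real.arccos (|J| / Real.sqrt (1 - J ^ 2)))
  else if 1 / Real.sqrt 2 ≤ |J| ∧ |J| ≤ 1 then 3 / 2
  else 0

open Real Set

noncomputable def alignmentBranch (x : ℝ) : ℝ :=
  3 / 2 * (1 - 4 / π * arccos (x / √(1 - x ^ 2)))

noncomputable def alignmentBranchPrimitive (x : ℝ) : ℝ :=
  3 / 2 * (x - 4 / π * (x * arccos (x / √(1 - x ^ 2)) - arctan √(1 - 2 * x ^ 2)))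

lemma sq_div_sqrt_one_sub_sq {x : ℝ} (hx : x ^ 2 < 1) :
    (x / √(1 - x ^ 2)) ^ 2 = x ^ 2 / (1 - x ^ 2) := by
  rw [div_pow, sq_sqrt (by linarith)]

lemma hasDerivAt_arccos_div_sqrt_one_sub_sq {x : ℝ} (hx : x ^ 2 < 1 / 2) :
    HasDerivAt (fun y => arccos (y / √(1 - y ^ 2)))
      (-(1 / ((1 - x ^ 2) * √(1 - 2 * x ^ 2)))) x := by
  have hpos : 0 < 1 - x ^ 2 := by linarith
  have hs : 0 < √(1 - x ^ 2) := sqrt_pos.2 hpos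
  have hs2 : √(1 - x ^ 2) ^ 2 = 1 - x ^ 2 := sq_sqrt hpos.le
  have hv : 0 < √(1 - 2 * x ^ 2) := sqrt_pos.2 (by linarith)
  have hsq : (x / √(1 - x ^ 2)) ^ 2 < 1 := by
    rw [sq_div_sqrt_one_sub_sq (by linarith), div_lt_one (by linarith)]
    linarith
  have hquot : HasDerivAt (fun y => y / √(1 - y ^ 2)) (1 / √(1 - x ^ 2) ^ 3) x := by
    have hsqrt := ((hasDerivAt_pow 2 x).const_sub 1).sqrt (by linarith)
    refine ((hasDerivAt_id' x).div hsqrt hs.ne').congr_deriv ?_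
    field_simp
    rw [hs2]
    ring
  have hroot : √(1 - (x / √(1 - x ^ 2)) ^ 2) = √(1 - 2 * x ^ 2) / √(1 - x ^ 2) := by
    rw [← sqrt_div' _ (by linarith), sq_div_sqrt_one_sub_sq (by linarith)]
    congr 1
    field_simp
    ring
  have hne : x / √(1 - x ^ 2) ≠ 1 ∧ x / √(1 - x ^ 2) ≠ -1 := by
    constructor <;> rintro h <;> rw [h] at hsq <;> norm_num at hsq
  refine ((hasDerivAt_arccos hne.2 hne.1).comp x hquot).congr_deriv ?_
  rw [hroot]
  field_simp
  rw [hs2]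

lemma hasDerivAt_arctan_sqrt_one_sub_two_mul_sq {x : ℝ} (hx : x ^ 2 < 1 / 2) :
    HasDerivAt (fun y => arctan √(1 - 2 * y ^ 2))
      (-(x / ((1 - x ^ 2) * √(1 - 2 * x ^ 2)))) x := by
  have hw : 0 < 1 - 2 * x ^ 2 := by linarith
  have hv : 0 < √(1 - 2 * x ^ 2) := sqrt_pos.2 hw
  have hpos : 0 < 1 - x ^ 2 := by linarith
  refine (((hasDerivAt_pow 2 x).const_mul 2).const_sub 1).sqrt hw.ne' |>.arctan |>.congr_deriv ?_
  rw [sq_sqrt hw.le, show 1 + (1 - 2 * x ^ 2) = 2 * (1 - x ^ 2) by ring]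
  field_simp
  ring

/-- `x` times the derivative of `arccos (x / √(1 - x²))` is the derivative of
`arctan √(1 - 2x²)`, so only the arccos term survives. -/
lemma hasDerivAt_alignmentBranchPrimitive {x : ℝ} (hx : x ^ 2 < 1 / 2) :
    HasDerivAt alignmentBranchPrimitive (alignmentBranch x) x := by
  have h := ((hasDerivAt_id' x).mul (hasDerivAt_arccos_div_sqrt_one_sub_sq hx)).sub
    (hasDerivAt_arctan_sqrt_one_sub_two_mul_sq hx)
  refine (((hasDerivAt_id' x).sub (h.const_mul (4 / π))).const_mul (3 / 2)).congr_deriv ?_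
  rw [alignmentBranch]
  ring

lemma continuousOn_alignmentBranchPrimitive :
    ContinuousOn alignmentBranchPrimitive (Ioo (-1) 1) := by
  intro x ⟨hx1, hx2⟩
  have : √(1 - x ^ 2) ≠ 0 := (sqrt_pos.2 (by nlinarith)).ne'
  apply ContinuousAt.continuousWithinAt
  unfold alignmentBranchPrimitive
  fun_prop (disch := assumption)

lemma one_div_sqrt_sq {c : ℝ} (hc : 0 ≤ c) : (1 / √c) ^ 2 = 1 / c := by
  rw [div_pow, one_pow, sq_sqrt hc]

lemma one_div_sqrt_three_lt_one_div_sqrt_two : 1 / √3 < 1 / √2 :=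
  one_div_lt_one_div_of_lt (by positivity) (sqrt_lt_sqrt (by norm_num) (by norm_num))

lemma one_div_sqrt_two_lt_one : 1 / √2 < 1 :=
  (div_lt_one (by positivity)).2 (by rw [lt_sqrt zero_le_one]; norm_num)

lemma one_div_sqrt_three_div_sqrt_one_sub_sq : 1 / √3 / √(1 - (1 / √3) ^ 2) = √2 / 2 := by
  rw [← sq_eq_sq₀ (by positivity) (by positivity), sq_div_sqrt_one_sub_sq (by
    rw [one_div_sqrt_sq (by norm_num)]; norm_num), one_div_sqrt_sq (by norm_num), div_pow,
    sq_sqrt (by norm_num)]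
  norm_num

lemma one_div_sqrt_two_div_sqrt_one_sub_sq : 1 / √2 / √(1 - (1 / √2) ^ 2) = 1 := by
  rw [← sq_eq_sq₀ (by positivity) zero_le_one, sq_div_sqrt_one_sub_sq (by
    rw [one_div_sqrt_sq (by norm_num)]; norm_num), one_div_sqrt_sq (by norm_num)]
  norm_num

lemma alignmentBranch_one_div_sqrt_three : alignmentBranch (1 / √3) = 0 := by
  rw [alignmentBranch, one_div_sqrt_three_div_sqrt_one_sub_sq, ← cos_pi_div_four,
    arccos_cos (by positivity) (by linarith [pi_pos])]
  field_simp
  ring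

lemma alignmentBranch_one_div_sqrt_two : alignmentBranch (1 / √2) = 3 / 2 := by
  rw [alignmentBranch, one_div_sqrt_two_div_sqrt_one_sub_sq, arccos_one]
  ring

lemma alignmentBranchPrimitive_one_div_sqrt_three : alignmentBranchPrimitive (1 / √3) = 1 := by
  have hv : √(1 - 2 * (1 / √3) ^ 2) = (√3)⁻¹ := by
    rw [one_div_sqrt_sq (by norm_num), ← sqrt_inv]
    norm_num
  rw [alignmentBranchPrimitive, one_div_sqrt_three_div_sqrt_one_sub_sq, ← cos_pi_div_four,
    arccos_cos (by positivity) (by linarith [pi_pos]), hv, arctan_inv_sqrt_three]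
  field_simp
  ring

lemma alignmentBranchPrimitive_one_div_sqrt_two :
    alignmentBranchPrimitive (1 / √2) = 3 / 2 * (1 / √2) := by
  rw [alignmentBranchPrimitive, one_div_sqrt_two_div_sqrt_one_sub_sq, arccos_one,
    one_div_sqrt_sq (by norm_num)]
  norm_num

lemma alignmentBranch_nonneg {x : ℝ} (h₁ : 1 / √3 ≤ x) (h₂ : x < 1) : 0 ≤ alignmentBranch x := by
  have hx0 : 0 ≤ x := le_trans (by positivity) h₁
  have hx : 1 / 3 ≤ x ^ 2 := by
    simpa only [one_div_sqrt_sq (show (0 : ℝ) ≤ 3 by norm_num)] using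
      pow_le_pow_left₀ (by positivity) h₁ 2
  have hx1 : x ^ 2 < 1 := by nlinarith
  have hu : √2 / 2 ≤ x / √(1 - x ^ 2) := by
    rw [← sq_le_sq₀ (by positivity) (by positivity), sq_div_sqrt_one_sub_sq hx1,
      le_div_iff₀ (by linarith), div_pow, sq_sqrt zero_le_two]
    linarith
  have harccos : 4 / π * arccos (x / √(1 - x ^ 2)) ≤ 1 := by
    rw [div_mul_eq_mul_div, div_le_one pi_pos]
    linarith [arccos_le_pi_div_four.2 hu]
  rw [alignmentBranch]
  linarith

lemma alignmentBranch_le (x : ℝ) : alignmentBranch x ≤ 3 / 2 := by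
  have : 0 ≤ 4 / π * arccos (x / √(1 - x ^ 2)) := by
    have := arccos_nonneg (x / √(1 - x ^ 2))
    positivity
  rw [alignmentBranch]
  linarith

lemma alignmentPDF_abs (J : ℝ) : alignmentPDF |J| = alignmentPDF J := by
  simp only [alignmentPDF, abs_abs, sq_abs]

lemma alignmentPDF_eq_alignmentBranch {J : ℝ} (h₁ : 1 / √3 ≤ |J|) (h₂ : |J| ≤ 1 / √2) :
    alignmentPDF J = alignmentBranch |J| := by
  rcases h₂.lt_or_eq with h₂ | h₂
  · rw [alignmentPDF, if_pos ⟨h₁, h₂⟩, alignmentBranch, sq_abs]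
  · rw [alignmentPDF, if_neg fun h => h.2.ne h₂, if_pos ⟨h₂.ge, h₂ ▸ one_div_sqrt_two_lt_one.le⟩,
      h₂, alignmentBranch_one_div_sqrt_two]

lemma alignmentPDF_eq_zero_of_abs_le {J : ℝ} (h : |J| ≤ 1 / √3) : alignmentPDF J = 0 := by
  rcases h.lt_or_eq with h | h
  · have h' : |J| < 1 / √2 := h.trans one_div_sqrt_three_lt_one_div_sqrt_two
    rw [alignmentPDF, if_neg fun h'' => h''.1.not_gt h, if_neg fun h'' => h''.1.not_gt h']
  · rw [alignmentPDF_eq_alignmentBranch h.ge (h ▸ one_div_sqrt_three_lt_one_div_sqrt_two.le), h,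
      alignmentBranch_one_div_sqrt_three]

lemma alignmentPDF_eq_three_halves {J : ℝ} (h₁ : 1 / √2 ≤ |J|) (h₂ : |J| ≤ 1) :
    alignmentPDF J = 3 / 2 := by
  rw [alignmentPDF, if_neg fun h => h.2.not_ge h₁, if_pos ⟨h₁, h₂⟩]

lemma alignmentPDF_eq_zero_of_one_lt_abs {J : ℝ} (h : 1 < |J|) : alignmentPDF J = 0 := by
  have h' : 1 / √2 < |J| := one_div_sqrt_two_lt_one.trans h
  rw [alignmentPDF, if_neg fun h'' => h''.2.not_gt h', if_neg fun h'' => h''.2.not_gt h]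

lemma alignmentPDF_nonneg (J : ℝ) : 0 ≤ alignmentPDF J := by
  by_cases h : 1 / √3 ≤ |J| ∧ |J| < 1 / √2
  · rw [alignmentPDF_eq_alignmentBranch h.1 h.2.le]
    exact alignmentBranch_nonneg h.1 (h.2.trans one_div_sqrt_two_lt_one)
  · rw [alignmentPDF, if_neg h]
    split_ifs <;> norm_num

lemma alignmentPDF_le (J : ℝ) : alignmentPDF J ≤ 3 / 2 := by
  unfold alignmentPDF
  split_ifs
  · simpa only [alignmentBranch, sq_abs] using alignmentBranch_le |J|
  all_goals norm_num

lemma measurable_alignmentPDF : Measurable alignmentPDF := by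
  refine .ite ?_ (by fun_prop) (.ite ?_ measurable_const measurable_const) <;> measurability

lemma intervalIntegrable_alignmentPDF (a b : ℝ) : IntervalIntegrable alignmentPDF volume a b :=
  (Measure.integrableOn_of_bounded measure_Icc_lt_top.ne
    measurable_alignmentPDF.aestronglyMeasurable (M := 3 / 2) (ae_of_all _ fun J => by
      rw [norm_of_nonneg (alignmentPDF_nonneg J)]
      exact alignmentPDF_le J)).intervalIntegrable

lemma integral_alignmentPDF_zero_one_div_sqrt_three : ∫ J in 0..1 / √3, alignmentPDF J = 0 := by
  rw [intervalIntegral.integral_congr (g := fun _ => 0), intervalIntegral.integral_zero]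
  intro J hJ
  rw [uIcc_of_le (by positivity)] at hJ
  exact alignmentPDF_eq_zero_of_abs_le (by rw [abs_of_nonneg hJ.1]; exact hJ.2)

lemma integral_alignmentPDF_one_div_sqrt_three_one_div_sqrt_two :
    ∫ J in 1 / √3..1 / √2, alignmentPDF J = 3 / 2 * (1 / √2) - 1 := by
  have hab := one_div_sqrt_three_lt_one_div_sqrt_two
  rw [intervalIntegral.integral_eq_sub_of_hasDerivAt_of_le hab.le
      (continuousOn_alignmentBranchPrimitive.mono
        (Icc_subset_Ioo (by linarith [show 0 < 1 / √3 by positivity]) one_div_sqrt_two_lt_one))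
      ?_ (intervalIntegrable_alignmentPDF _ _),
    alignmentBranchPrimitive_one_div_sqrt_two, alignmentBranchPrimitive_one_div_sqrt_three]
  rintro x ⟨h₁, h₂⟩
  have hx : |x| = x := abs_of_pos (lt_trans (by positivity) h₁)
  rw [alignmentPDF_eq_alignmentBranch (by rw [hx]; exact h₁.le) (by rw [hx]; exact h₂.le), hx]
  refine hasDerivAt_alignmentBranchPrimitive ?_
  simpa only [one_div_sqrt_sq (show (0 : ℝ) ≤ 2 by norm_num)] using
    pow_lt_pow_left₀ h₂ (hx ▸ abs_nonneg x) two_ne_zero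

lemma integral_alignmentPDF_one_div_sqrt_two_one :
    ∫ J in 1 / √2..1, alignmentPDF J = (1 - 1 / √2) * (3 / 2) := by
  rw [intervalIntegral.integral_congr (g := fun _ => 3 / 2), intervalIntegral.integral_const,
    smul_eq_mul]
  intro J hJ
  rw [uIcc_of_le one_div_sqrt_two_lt_one.le] at hJ
  have hJ' : |J| = J := abs_of_nonneg (le_trans (by positivity) hJ.1)
  exact alignmentPDF_eq_three_halves (by rw [hJ']; exact hJ.1) (by rw [hJ']; exact hJ.2)

lemma setIntegral_Ioi_alignmentPDF :
    ∫ J in Ioi 0, alignmentPDF J = ∫ J in 0..1, alignmentPDF J := by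
  rw [intervalIntegral.integral_of_le zero_le_one,
    setIntegral_eq_of_subset_of_forall_sdiff_eq_zero measurableSet_Ioi
      Ioc_subset_Ioi_self]
  rintro J ⟨hJ, hJ'⟩
  exact alignmentPDF_eq_zero_of_one_lt_abs
    (by rw [abs_of_pos hJ]; exact lt_of_not_ge fun h => hJ' ⟨hJ, h⟩)

/-- The alignment-factor density `f_J` is nonnegative and integrates to `1`
over `ℝ`, i.e. it is a probability density function. -/
theorem alignmentPDF_is_pdf :
    (∀ J : ℝ, 0 ≤ alignmentPDF J) ∧ ∫ J : ℝ, alignmentPDF J = 1 := by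
  refine ⟨alignmentPDF_nonneg, ?_⟩
  have hsplit (a b c : ℝ) := intervalIntegral.integral_add_adjacent_intervals
    (intervalIntegrable_alignmentPDF a b) (intervalIntegrable_alignmentPDF b c)
  calc ∫ J, alignmentPDF J
      = ∫ J, alignmentPDF |J| := by simp only [alignmentPDF_abs]
    _ = 2 * ∫ J in 0..1, alignmentPDF J := by rw [integral_comp_abs, setIntegral_Ioi_alignmentPDF]
    _ = 2 * ((∫ J in 0..1 / √3, alignmentPDF J) + (∫ J in 1 / √3..1 / √2, alignmentPDF J)
          + ∫ J in 1 / √2..1, alignmentPDF J) := by rw [hsplit, hsplit]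
    _ = 1 := by
      rw [integral_alignmentPDF_zero_one_div_sqrt_three,
        integral_alignmentPDF_one_div_sqrt_three_one_div_sqrt_two,
        integral_alignmentPDF_one_div_sqrt_two_one]
      ring
end
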